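/- Let S be Stallings' group, given by the presentation ⟨a, b, c, d, e | b⁻¹ab = c⁻¹ac, b⁻¹ab = d⁻¹ad, b⁻¹ab = e⁻¹ae, [c,d] = 1, [d,b] = 1, [e,c] = 1, [e,b] = 1⟩. Then the third integral homology group H₃(S; ℤ) (group homology of S with trivial ℤ coefficients in degree 3) is not finitely generated as an abelian group. -/

import Mathlib

/-! Group homology with trivial `ℤ` coefficients, via the standard (inhomogeneous bar)
chain complex `⋯ → ℤ[G³] → ℤ[G²] → ℤ[G] → ℤ`, whose `n`-th term is the free `ℤ`-module on
`Gⁿ` and whose differential is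
`d(g₁, …, gₙ) = (g₂, …, gₙ) + Σᵢ (-1)ⁱ (g₁, …, gᵢgᵢ₊₁, …, gₙ) + (-1)ⁿ (g₁, …, gₙ₋₁)`. -/

/-- The bar differential `ℤ[G³] → ℤ[G²]`:
`d(g, h, k) = (h, k) - (gh, k) + (g, hk) - (g, h)`. -/
noncomputable def barD3 (G : Type*) [Group G] :
    ((G × G × G) →₀ ℤ) →ₗ[ℤ] ((G × G) →₀ ℤ) :=
  Finsupp.lift _ ℤ _ fun x =>
    Finsupp.single (x.2.1, x.2.2) 1 - Finsupp.single (x.1 * x.2.1, x.2.2) 1 +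
      Finsupp.single (x.1, x.2.1 * x.2.2) 1 - Finsupp.single (x.1, x.2.1) 1

/-- The bar differential `ℤ[G⁴] → ℤ[G³]`:
`d(g, h, k, l) = (h, k, l) - (gh, k, l) + (g, hk, l) - (g, h, kl) + (g, h, k)`. -/
noncomputable def barD4 (G : Type*) [Group G] :
    ((G × G × G × G) →₀ ℤ) →ₗ[ℤ] ((G × G × G) →₀ ℤ) :=
  Finsupp.lift _ ℤ _ fun x =>
    Finsupp.single (x.2.1, x.2.2.1, x.2.2.2) 1
      - Finsupp.single (x.1 * x.2.1, x.2.2.1, x.2.2.2) 1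
      + Finsupp.single (x.1, x.2.1 * x.2.2.1, x.2.2.2) 1
      - Finsupp.single (x.1, x.2.1, x.2.2.1 * x.2.2.2) 1
      + Finsupp.single (x.1, x.2.1, x.2.2.1) 1

/-- The third integral homology group `H₃(G; ℤ)` of a group `G` (group homology with trivial
`ℤ` coefficients), computed as `ker d₃ / im d₄` in the bar complex. -/
noncomputable abbrev H3 (G : Type*) [Group G] :=
  LinearMap.ker (barD3 G) ⧸
    Submodule.comap (LinearMap.ker (barD3 G)).subtype (LinearMap.range (barD4 G))

namespace Stallings

noncomputable def a : FreeGroup (Fin 5) := FreeGroup.of 0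
noncomputable def b : FreeGroup (Fin 5) := FreeGroup.of 1
noncomputable def c : FreeGroup (Fin 5) := FreeGroup.of 2
noncomputable def d : FreeGroup (Fin 5) := FreeGroup.of 3
noncomputable def e : FreeGroup (Fin 5) := FreeGroup.of 4

/-- The seven relators of Stallings' group `S`:
`b⁻¹ab(c⁻¹ac)⁻¹, b⁻¹ab(d⁻¹ad)⁻¹, b⁻¹ab(e⁻¹ae)⁻¹, [c,d], [d,b], [e,c], [e,b]`,
where `[x,y] = x⁻¹y⁻¹xy`. -/
noncomputable def stallingsRelators : Set (FreeGroup (Fin 5)) :=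
  {b⁻¹ * a * b * (c⁻¹ * a * c)⁻¹, b⁻¹ * a * b * (d⁻¹ * a * d)⁻¹,
   b⁻¹ * a * b * (e⁻¹ * a * e)⁻¹,
   c⁻¹ * d⁻¹ * c * d, d⁻¹ * b⁻¹ * d * b, e⁻¹ * c⁻¹ * e * c, e⁻¹ * b⁻¹ * e * b}

/-- Stallings' group `S`. -/
noncomputable abbrev StallingsGroup : Type :=
  FreeGroup (Fin 5) ⧸ Subgroup.normalClosure stallingsRelators

end Stallings

/-!
Stallings' group maps to `W = ℤ[t^±1]³ ⋊ ℤ²`, where `(m, n)` acts on the three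
factors by `t^m`, `t^n` and `t^(-m-n)`. The three coordinate projections of `W` are crossed
homomorphisms whose twisting characters multiply to `1`, so their cup product is a 3-cocycle with
trivial coefficients in `ℤ[t^±1]`. In `S` the elements `aₙ = b⁻ⁿabⁿ`, `β = bc⁻¹` and `γ = de⁻¹`
pairwise commute, so each triple `(aₙ, β, γ)` carries a torus class in `H₃(S)`, on which the
pulled-back cocycle takes the value `tⁿ`. These values are linearly independent, so `H₃(S)`
contains a free abelian group of infinite rank.
-/

open LaurentPolynomial

section BarComplex

variable {G H A : Type*} [Group G] [Group H] [AddCommGroup A]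

lemma barD3_single (x : G × G × G) :
    barD3 G (Finsupp.single x 1) =
      Finsupp.single (x.2.1, x.2.2) 1 - Finsupp.single (x.1 * x.2.1, x.2.2) 1 +
        Finsupp.single (x.1, x.2.1 * x.2.2) 1 - Finsupp.single (x.1, x.2.1) 1 := by
  simp [barD3]

lemma barD4_single (x : G × G × G × G) :
    barD4 G (Finsupp.single x 1) =
      Finsupp.single (x.2.1, x.2.2.1, x.2.2.2) 1
        - Finsupp.single (x.1 * x.2.1, x.2.2.1, x.2.2.2) 1
        + Finsupp.single (x.1, x.2.1 * x.2.2.1, x.2.2.2) 1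
        - Finsupp.single (x.1, x.2.1, x.2.2.1 * x.2.2.2) 1
        + Finsupp.single (x.1, x.2.1, x.2.2.1) 1 := by
  simp [barD4]

def IsBarCocycle3 (f : G × G × G → A) : Prop :=
  ∀ g₁ g₂ g₃ g₄ : G, f (g₂, g₃, g₄) - f (g₁ * g₂, g₃, g₄) + f (g₁, g₂ * g₃, g₄)
    - f (g₁, g₂, g₃ * g₄) + f (g₁, g₂, g₃) = 0

lemma IsBarCocycle3.comp {f : H × H × H → A} (hf : IsBarCocycle3 f) (ψ : G →* H) :
    IsBarCocycle3 fun x : G × G × G => f (ψ x.1, ψ x.2.1, ψ x.2.2) := by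
  intro g₁ g₂ g₃ g₄
  simpa only [map_mul] using hf (ψ g₁) (ψ g₂) (ψ g₃) (ψ g₄)

lemma IsBarCocycle3.linearCombination_comp_barD4 {f : G × G × G → A} (hf : IsBarCocycle3 f) :
    (Finsupp.linearCombination ℤ f).comp (barD4 G) = 0 := by
  refine Finsupp.lhom_ext' fun x => LinearMap.ext_ring ?_
  simpa [barD4_single] using hf x.1 x.2.1 x.2.2.1 x.2.2.2

noncomputable def H3.pairing (f : G × G × G → A) (hf : IsBarCocycle3 f) : H3 G →ₗ[ℤ] A :=
  Submodule.liftQ _ ((Finsupp.linearCombination ℤ f).comp (LinearMap.ker (barD3 G)).subtype)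
    fun _ hz => by
      obtain ⟨y, hy⟩ := Submodule.mem_comap.mp hz
      simpa [hy] using LinearMap.congr_fun hf.linearCombination_comp_barD4 y

-- The image of the fundamental class of the 3-torus under `ℤ³ → G` sending the basis to `x, y, z`.
noncomputable def torusCycle (x y z : G) : (G × G × G) →₀ ℤ :=
  Finsupp.single (x, y, z) 1 - Finsupp.single (y, x, z) 1 + Finsupp.single (y, z, x) 1
    - Finsupp.single (x, z, y) 1 + Finsupp.single (z, x, y) 1 - Finsupp.single (z, y, x) 1

lemma barD3_torusCycle {x y z : G} (hxy : Commute x y) (hxz : Commute x z) (hyz : Commute y z) :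
    barD3 G (torusCycle x y z) = 0 := by
  simp only [torusCycle, map_sub, map_add, barD3_single]
  rw [hxy.eq, hxz.eq, hyz.eq]
  abel

noncomputable def H3.torusClass {x y z : G} (hxy : Commute x y) (hxz : Commute x z)
    (hyz : Commute y z) : H3 G :=
  Submodule.Quotient.mk ⟨torusCycle x y z, barD3_torusCycle hxy hxz hyz⟩

lemma H3.pairing_torusClass {f : G × G × G → A} (hf : IsBarCocycle3 f) {x y z : G}
    (hxy : Commute x y) (hxz : Commute x z) (hyz : Commute y z) :
    pairing f hf (torusClass hxy hxz hyz) =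
      f (x, y, z) - f (y, x, z) + f (y, z, x) - f (x, z, y) + f (z, x, y) - f (z, y, x) := by
  simp [pairing, torusClass, torusCycle]

end BarComplex

section CupProduct

variable {G A : Type*} [Group G] [CommRing A]

def IsCrossedHom (u : G →* A) (φ : G → A) : Prop :=
  ∀ g h, φ (g * h) = φ g + u g * φ h

lemma isBarCocycle3_cup {u₁ u₂ u₃ : G →* A} (hu : ∀ g, u₁ g * u₂ g * u₃ g = 1)
    {φ₁ φ₂ φ₃ : G → A} (h₁ : IsCrossedHom u₁ φ₁) (h₂ : IsCrossedHom u₂ φ₂)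
    (h₃ : IsCrossedHom u₃ φ₃) :
    IsBarCocycle3 fun x : G × G × G =>
      φ₁ x.1 * (u₂ x.1 * φ₂ x.2.1) * (u₃ (x.1 * x.2.1) * φ₃ x.2.2) := by
  intro g₁ g₂ g₃ g₄
  simp only [h₁ g₁ g₂, h₂ g₂ g₃, h₃ g₃ g₄, map_mul]
  linear_combination (-(φ₁ g₂ * u₂ g₂ * φ₂ g₃ * u₃ g₂ * u₃ g₃ * φ₃ g₄)) * hu g₁

end CupProduct

lemma LaurentPolynomial.linearIndependent_T_natCast (R : Type*) [Semiring R] :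
    LinearIndependent R fun n : ℕ => (T n : R[T;T⁻¹]) := by
  simpa [Function.comp_def] using
    (AddMonoidAlgebra.basis ℤ R).linearIndependent.comp _ Nat.cast_injective

section Conjugation

variable {G : Type*} [Group G]

lemma conj_conj_of_commute {u v : G} (h : Commute u v) (x : G) :
    v⁻¹ * (u⁻¹ * x * u) * v = u⁻¹ * (v⁻¹ * x * v) * u := by
  calc v⁻¹ * (u⁻¹ * x * u) * v = (u * v)⁻¹ * x * (u * v) := by group
    _ = (v * u)⁻¹ * x * (v * u) := by rw [h.eq]
    _ = u⁻¹ * (v⁻¹ * x * v) * u := by group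

lemma commute_mul_inv_of_conj_eq {u v x : G} (h : u⁻¹ * x * u = v⁻¹ * x * v) :
    Commute x (u * v⁻¹) := by
  calc x * (u * v⁻¹) = u * (u⁻¹ * x * u) * v⁻¹ := by group
    _ = u * (v⁻¹ * x * v) * v⁻¹ := by rw [h]
    _ = u * v⁻¹ * x := by group

end Conjugation

namespace Stallings

@[ext] structure W where
  p : ℤ[T;T⁻¹]
  q : ℤ[T;T⁻¹]
  r : ℤ[T;T⁻¹]
  m : ℤ
  n : ℤ

namespace W

noncomputable instance : Mul W :=
  ⟨fun g h => ⟨g.p + T g.m * h.p, g.q + T g.n * h.q, g.r + T (-g.m) * T (-g.n) * h.r,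
    g.m + h.m, g.n + h.n⟩⟩

noncomputable instance : One W := ⟨⟨0, 0, 0, 0, 0⟩⟩

noncomputable instance : Inv W :=
  ⟨fun g => ⟨-(T (-g.m) * g.p), -(T (-g.n) * g.q), -(T g.m * T g.n * g.r), -g.m, -g.n⟩⟩

@[simp] lemma mul_p (g h : W) : (g * h).p = g.p + T g.m * h.p := rfl
@[simp] lemma mul_q (g h : W) : (g * h).q = g.q + T g.n * h.q := rfl
@[simp] lemma mul_r (g h : W) : (g * h).r = g.r + T (-g.m) * T (-g.n) * h.r := rfl
@[simp] lemma mul_m (g h : W) : (g * h).m = g.m + h.m := rfl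
@[simp] lemma mul_n (g h : W) : (g * h).n = g.n + h.n := rfl
@[simp] lemma one_p : (1 : W).p = 0 := rfl
@[simp] lemma one_q : (1 : W).q = 0 := rfl
@[simp] lemma one_r : (1 : W).r = 0 := rfl
@[simp] lemma one_m : (1 : W).m = 0 := rfl
@[simp] lemma one_n : (1 : W).n = 0 := rfl
@[simp] lemma inv_p (g : W) : g⁻¹.p = -(T (-g.m) * g.p) := rfl
@[simp] lemma inv_q (g : W) : g⁻¹.q = -(T (-g.n) * g.q) := rfl
@[simp] lemma inv_r (g : W) : g⁻¹.r = -(T g.m * T g.n * g.r) := rfl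
@[simp] lemma inv_m (g : W) : g⁻¹.m = -g.m := rfl
@[simp] lemma inv_n (g : W) : g⁻¹.n = -g.n := rfl

noncomputable instance : Group W where
  mul_assoc g h k := by ext : 1 <;> simp [-T_mul, T_add] <;> ring
  one_mul g := by ext : 1 <;> simp [-T_mul, T_zero]
  mul_one g := by ext : 1 <;> simp [-T_mul]
  inv_mul_cancel g := by ext : 1 <;> simp [-T_mul, ← T_add]

noncomputable def twist₁ : W →* ℤ[T;T⁻¹] where
  toFun g := T g.m
  map_one' := T_zero
  map_mul' g h := T_add g.m h.m

noncomputable def twist₂ : W →* ℤ[T;T⁻¹] where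
  toFun g := T g.n
  map_one' := T_zero
  map_mul' g h := T_add g.n h.n

noncomputable def twist₃ : W →* ℤ[T;T⁻¹] where
  toFun g := T (-g.m) * T (-g.n)
  map_one' := by simp [T_zero]
  map_mul' g h := by simp only [mul_m, mul_n, neg_add, T_add]; ring

lemma twist_mul_twist_mul_twist (g : W) : twist₁ g * twist₂ g * twist₃ g = 1 := by
  simp only [twist₁, twist₂, twist₃, MonoidHom.coe_mk, OneHom.coe_mk]
  rw [mul_mul_mul_comm, ← T_add, ← T_add, add_neg_cancel, add_neg_cancel, T_zero, one_mul]

lemma isBarCocycle3_cup :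
    IsBarCocycle3 fun x : W × W × W =>
      x.1.p * (twist₂ x.1 * x.2.1.q) * (twist₃ (x.1 * x.2.1) * x.2.2.r) :=
  _root_.isBarCocycle3_cup twist_mul_twist_mul_twist
    (fun _ _ => rfl) (fun _ _ => rfl) (fun _ _ => rfl)

end W

-- `b`, `c`, `d`, `e` all have `m = -1`, so conjugation by any of them acts alike on `a`.
noncomputable def generatorImage : Fin 5 → W :=
  ![⟨1, 0, 0, 0, 0⟩, ⟨0, 0, 0, -1, 1⟩, ⟨0, -1, 0, -1, 1⟩, ⟨0, 0, 0, -1, 0⟩, ⟨0, 0, -1, -1, 0⟩]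

lemma lift_generatorImage_relator :
    ∀ x ∈ stallingsRelators, FreeGroup.lift generatorImage x = 1 := by
  simp only [stallingsRelators, Set.mem_insert_iff, Set.mem_singleton_iff, forall_eq_or_imp,
    forall_eq]
  refine ⟨?_, ?_, ?_, ?_, ?_, ?_, ?_⟩ <;> ext : 1 <;>
    simp [-T_mul, a, b, c, d, e, generatorImage, T_zero, ← T_add]

noncomputable def ψ : StallingsGroup →* W :=
  QuotientGroup.lift _ (FreeGroup.lift generatorImage)
    (Subgroup.normalClosure_le_normal lift_generatorImage_relator)

noncomputable def sa : StallingsGroup := a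
noncomputable def sb : StallingsGroup := b
noncomputable def sc : StallingsGroup := c
noncomputable def sd : StallingsGroup := d
noncomputable def se : StallingsGroup := e

lemma commute_of_mem_relators {x y : FreeGroup (Fin 5)}
    (h : x⁻¹ * y⁻¹ * x * y ∈ stallingsRelators) : Commute (x : StallingsGroup) y := by
  have h1 : ((x⁻¹ * y⁻¹ * x * y : FreeGroup (Fin 5)) : StallingsGroup) = 1 :=
    (QuotientGroup.eq_one_iff _).2 (Subgroup.subset_normalClosure h)
  rw [show x⁻¹ * y⁻¹ * x * y = (y * x)⁻¹ * (x * y) by group, QuotientGroup.mk_mul,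
    QuotientGroup.mk_inv, inv_mul_eq_one] at h1
  exact h1.symm

lemma conj_eq_of_mem_relators {x : FreeGroup (Fin 5)}
    (h : b⁻¹ * a * b * (x⁻¹ * a * x)⁻¹ ∈ stallingsRelators) :
    sb⁻¹ * sa * sb = (x : StallingsGroup)⁻¹ * sa * x := by
  have h1 : ((b⁻¹ * a * b * (x⁻¹ * a * x)⁻¹ : FreeGroup (Fin 5)) : StallingsGroup) = 1 :=
    (QuotientGroup.eq_one_iff _).2 (Subgroup.subset_normalClosure h)
  simp only [QuotientGroup.mk_mul, QuotientGroup.mk_inv, mul_inv_eq_one] at h1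
  exact h1

lemma conj_b_eq_conj_c : sb⁻¹ * sa * sb = sc⁻¹ * sa * sc :=
  conj_eq_of_mem_relators (by simp [stallingsRelators])

lemma conj_b_eq_conj_d : sb⁻¹ * sa * sb = sd⁻¹ * sa * sd :=
  conj_eq_of_mem_relators (by simp [stallingsRelators])

lemma conj_b_eq_conj_e : sb⁻¹ * sa * sb = se⁻¹ * sa * se :=
  conj_eq_of_mem_relators (by simp [stallingsRelators])

lemma commute_c_d : Commute sc sd := commute_of_mem_relators (by simp [stallingsRelators])
lemma commute_d_b : Commute sd sb := commute_of_mem_relators (by simp [stallingsRelators])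
lemma commute_e_c : Commute se sc := commute_of_mem_relators (by simp [stallingsRelators])
lemma commute_e_b : Commute se sb := commute_of_mem_relators (by simp [stallingsRelators])

def ConjAgree (x : StallingsGroup) : Prop :=
  sb⁻¹ * x * sb = sc⁻¹ * x * sc ∧ sb⁻¹ * x * sb = sd⁻¹ * x * sd ∧
    sb⁻¹ * x * sb = se⁻¹ * x * se

lemma ConjAgree.conj_b {x : StallingsGroup} (hx : ConjAgree x) : ConjAgree (sb⁻¹ * x * sb) := by
  obtain ⟨hc, hd, he⟩ := hx
  have hbd : sb⁻¹ * (sb⁻¹ * x * sb) * sb = sd⁻¹ * (sb⁻¹ * x * sb) * sd := by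
    conv_lhs => rw [hd]
    exact conj_conj_of_commute commute_d_b _
  have hcd : sc⁻¹ * (sb⁻¹ * x * sb) * sc = sd⁻¹ * (sb⁻¹ * x * sb) * sd := by
    conv_lhs => rw [hd]
    rw [conj_conj_of_commute commute_c_d.symm, ← hc]
  have hec : se⁻¹ * (sb⁻¹ * x * sb) * se = sc⁻¹ * (sb⁻¹ * x * sb) * sc := by
    conv_lhs => rw [hc]
    rw [conj_conj_of_commute commute_e_c.symm, ← he]
  exact ⟨hbd.trans hcd.symm, hbd, (hbd.trans hcd.symm).trans hec.symm⟩

noncomputable def α : ℕ → StallingsGroup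
  | 0 => sa
  | n + 1 => sb⁻¹ * α n * sb

noncomputable def β : StallingsGroup := sb * sc⁻¹

noncomputable def γ : StallingsGroup := sd * se⁻¹

lemma conjAgree_α (n : ℕ) : ConjAgree (α n) := by
  induction n with
  | zero => exact ⟨conj_b_eq_conj_c, conj_b_eq_conj_d, conj_b_eq_conj_e⟩
  | succ n ih => exact ih.conj_b

lemma commute_α_β (n : ℕ) : Commute (α n) β :=
  commute_mul_inv_of_conj_eq (conjAgree_α n).1

lemma commute_α_γ (n : ℕ) : Commute (α n) γ :=
  commute_mul_inv_of_conj_eq ((conjAgree_α n).2.1.symm.trans (conjAgree_α n).2.2)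

lemma commute_β_γ : Commute β γ :=
  ((commute_d_b.symm.mul_right commute_e_b.symm.inv_right).mul_left
    (commute_c_d.mul_right commute_e_c.symm.inv_right).inv_left)

lemma ψ_mk_of (i : Fin 5) : ψ (FreeGroup.of i) = generatorImage i := by
  simp [ψ]

lemma ψ_α (n : ℕ) : ψ (α n) = ⟨T n, 0, 0, 0, 0⟩ := by
  induction n with
  | zero => exact ψ_mk_of 0
  | succ n ih =>
    simp only [α, map_mul, map_inv, ih]
    rw [sb, b, ψ_mk_of]
    ext : 1 <;> simp [-T_mul, generatorImage, ← T_add, add_comm]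

lemma ψ_β : ψ β = ⟨0, 1, 0, 0, 0⟩ := by
  simp only [β, sb, sc, b, c, map_mul, map_inv, ψ_mk_of]
  ext : 1 <;> simp [-T_mul, generatorImage, ← T_add]

lemma ψ_γ : ψ γ = ⟨0, 0, 1, 0, 0⟩ := by
  simp only [γ, sd, se, d, e, map_mul, map_inv, ψ_mk_of]
  ext : 1 <;> simp [-T_mul, generatorImage, ← T_add]

noncomputable def cupPairing : H3 StallingsGroup →ₗ[ℤ] ℤ[T;T⁻¹] :=
  H3.pairing _ (W.isBarCocycle3_cup.comp ψ)

lemma cupPairing_torusClass (n : ℕ) :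
    cupPairing (H3.torusClass (commute_α_β n) (commute_α_γ n) commute_β_γ) = T n := by
  rw [cupPairing, H3.pairing_torusClass]
  simp [-T_mul, ψ_α, ψ_β, ψ_γ, W.twist₂, W.twist₃, T_zero]

/-- The third integral homology group `H₃(S; ℤ)` of Stallings' group `S` is not
finitely generated as an abelian group. -/
theorem h3_stallingsGroup_not_fg : ¬ AddGroup.FG (H3 StallingsGroup) := by
  rw [← Module.Finite.iff_addGroup_fg]
  intro _
  have hT : LinearIndependent ℤ fun n : ℕ => cupPairing
      (H3.torusClass (commute_α_β n) (commute_α_γ n) commute_β_γ) := by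
    simpa only [cupPairing_torusClass] using linearIndependent_T_natCast ℤ
  exact Module.Finite.not_linearIndependent_of_infinite _ (hT.of_comp cupPairing)

end Stallings
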